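/- Let $c\in\mathbb{R}$ and let $g:(0,T)\times\mathbb{R}^2\to\mathbb{R}^3$, $q:(0,T)\times\mathbb{R}^2\to\mathbb{R}$ be smooth. Define $u(t,x,y,z)=g(t,x-cy,z)$ and $p(t,x,y,z)=q(t,x-cy,z)$, and set $h_1(t,w,z)=\frac{1}{\sqrt{1+c^2}}(g_1(t,\sqrt{1+c^2}\,w,z)-c\,g_2(t,\sqrt{1+c^2}\,w,z))$, $h_2(t,w,z)=g_3(t,\sqrt{1+c^2}\,w,z)$, $\rho(t,w,z)=q(t,\sqrt{1+c^2}\,w,z)$. If $(u,p)$ solves the three-dimensional incompressible Navier–Stokes equations $u_t-\Delta u+(u\cdot\nabla)u=\nabla p$, $\operatorname{div} u=0$, then $(h,\rho)$ with $h=(h_1,h_2)$ solves the two-dimensional incompressible Navier–Stokes equations $h_t-\Delta h+(h\cdot\nabla)h=\nabla\rho$, $\operatorname{div} h=0$. -/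

import Mathlib

open Set

/-- Partial derivative of a function of three real variables in direction `j`. -/
noncomputable def pd3 (f : ℝ → ℝ → ℝ → ℝ) (j : Fin 3) (x y z : ℝ) : ℝ :=
  match j with
  | 0 => deriv (fun a => f a y z) x
  | 1 => deriv (fun a => f x a z) y
  | 2 => deriv (fun a => f x y a) z

/-- Partial derivative of a function of two real variables in direction `j`. -/
noncomputable def pd2 (f : ℝ → ℝ → ℝ) (j : Fin 2) (w z : ℝ) : ℝ :=
  match j with
  | 0 => deriv (fun a => f a z) w
  | 1 => deriv (fun a => f w a) z

lemma pd3_zero (f : ℝ → ℝ → ℝ → ℝ) (x y z : ℝ) : pd3 f 0 x y z = deriv (fun a => f a y z) x := rfl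
lemma pd3_one (f : ℝ → ℝ → ℝ → ℝ) (x y z : ℝ) : pd3 f 1 x y z = deriv (fun a => f x a z) y := rfl
lemma pd3_two (f : ℝ → ℝ → ℝ → ℝ) (x y z : ℝ) : pd3 f 2 x y z = deriv (fun a => f x y a) z := rfl
lemma pd2_zero (f : ℝ → ℝ → ℝ) (w z : ℝ) : pd2 f 0 w z = deriv (fun a => f a z) w := rfl
lemma pd2_one (f : ℝ → ℝ → ℝ) (w z : ℝ) : pd2 f 1 w z = deriv (fun a => f w a) z := rfl

lemma dscale (f : ℝ → ℝ) (hf : Differentiable ℝ f) (s w : ℝ) :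
    deriv (fun a => f (s * a)) w = s * deriv f (s * w) := by
  have hi : HasDerivAt (fun a : ℝ => s * a) (s * 1) w := (hasDerivAt_id w).const_mul s
  have h : HasDerivAt (fun a => f (s * a)) (deriv f (s * w) * (s * 1)) w :=
    HasDerivAt.comp w (hf (s * w)).hasDerivAt hi
  rw [h.deriv]; ring

lemma dshift (f : ℝ → ℝ) (hf : Differentiable ℝ f) (W c y : ℝ) :
    deriv (fun b => f (W - c * b)) y = -c * deriv f (W - c * y) := by
  have hi : HasDerivAt (fun b : ℝ => W - c * b) (-(c * 1)) y :=
    ((hasDerivAt_id y).const_mul c).const_sub W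
  have h : HasDerivAt (fun b => f (W - c * b)) (deriv f (W - c * y) * (-(c * 1))) y :=
    HasDerivAt.comp y (hf (W - c * y)).hasDerivAt hi
  rw [h.deriv]; ring

lemma sliceCD {T : ℝ} {F : ℝ → ℝ → ℝ → ℝ}
    (hF : ContDiffOn ℝ (⊤ : ℕ∞) (fun P : ℝ × ℝ × ℝ => F P.1 P.2.1 P.2.2)
      ((Ioo 0 T) ×ˢ (univ : Set (ℝ × ℝ)))) {t : ℝ} (ht : t ∈ Ioo 0 T) :
    ContDiff ℝ (⊤ : ℕ∞) (fun P : ℝ × ℝ => F t P.1 P.2) := by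
  rw [contDiff_iff_contDiffAt]
  intro P
  have h1 : ContDiffAt ℝ (⊤ : ℕ∞) (fun P : ℝ × ℝ × ℝ => F P.1 P.2.1 P.2.2) (t, P) :=
    hF.contDiffAt ((isOpen_Ioo.prod isOpen_univ).mem_nhds ⟨ht, trivial⟩)
  exact h1.comp P ((contDiff_const.prodMk contDiff_id).contDiffAt)

lemma timeDiff {T : ℝ} {F : ℝ → ℝ → ℝ → ℝ}
    (hF : ContDiffOn ℝ (⊤ : ℕ∞) (fun P : ℝ × ℝ × ℝ => F P.1 P.2.1 P.2.2)
      ((Ioo 0 T) ×ˢ (univ : Set (ℝ × ℝ)))) {t : ℝ} (ht : t ∈ Ioo 0 T) (a b : ℝ) :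
    DifferentiableAt ℝ (fun τ => F τ a b) t := by
  have h1 : ContDiffAt ℝ (⊤ : ℕ∞) (fun P : ℝ × ℝ × ℝ => F P.1 P.2.1 P.2.2) (t, a, b) :=
    hF.contDiffAt ((isOpen_Ioo.prod isOpen_univ).mem_nhds ⟨ht, trivial⟩)
  have hc : ContDiff ℝ (⊤ : ℕ∞) (fun τ : ℝ => ((τ, a, b) : ℝ × ℝ × ℝ)) :=
    contDiff_id.prodMk contDiff_const
  have h2 : ContDiffAt ℝ (⊤ : ℕ∞) (fun τ : ℝ => F τ a b) t := h1.comp (g := fun P : ℝ × ℝ × ℝ => F P.1 P.2.1 P.2.2) t hc.contDiffAt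
  exact h2.differentiableAt (by simp)
lemma derivDiff {f : ℝ → ℝ} (h : ContDiff ℝ (⊤ : ℕ∞) f) : Differentiable ℝ (deriv f) := by
  have h2 : ContDiff ℝ ((⊤ : ℕ∞) : WithTop ℕ∞) f := h.of_le (by simp)
  exact ((contDiff_infty_iff_deriv.mp h2).2).differentiable (by simp)

/-- if `u(t,x,y,z) = g(t, x - c y, z)`, `p(t,x,y,z) = q(t, x - c y, z)` solve
the 3D incompressible Navier–Stokes equations on `(0,T)×ℝ³`, then the profile
`h = (h₁, h₂)` with pressure `ρ` solves the 2D incompressible Navier–Stokes equations. -/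
theorem stmt_0 (c T : ℝ) (g : ℝ → ℝ → ℝ → Fin 3 → ℝ) (q : ℝ → ℝ → ℝ → ℝ)
    (hg : ContDiffOn ℝ (⊤ : ℕ∞) (fun P : ℝ × ℝ × ℝ => g P.1 P.2.1 P.2.2)
      ((Ioo 0 T) ×ˢ (univ : Set (ℝ × ℝ))))
    (hq : ContDiffOn ℝ (⊤ : ℕ∞) (fun P : ℝ × ℝ × ℝ => q P.1 P.2.1 P.2.2)
      ((Ioo 0 T) ×ˢ (univ : Set (ℝ × ℝ))))
    -- the plane wave and pressure
    (u : ℝ → ℝ → ℝ → ℝ → Fin 3 → ℝ) (p : ℝ → ℝ → ℝ → ℝ → ℝ)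
    (hu : ∀ t x y z, u t x y z = g t (x - c * y) z)
    (hp : ∀ t x y z, p t x y z = q t (x - c * y) z)
    -- the 2D profile
    (h : ℝ → ℝ → ℝ → Fin 2 → ℝ) (ρ : ℝ → ℝ → ℝ → ℝ)
    (hh1 : ∀ t w z, h t w z 0 = (1 / Real.sqrt (1 + c ^ 2)) *
      (g t (Real.sqrt (1 + c ^ 2) * w) z 0 - c * g t (Real.sqrt (1 + c ^ 2) * w) z 1))
    (hh2 : ∀ t w z, h t w z 1 = g t (Real.sqrt (1 + c ^ 2) * w) z 2)
    (hρ : ∀ t w z, ρ t w z = q t (Real.sqrt (1 + c ^ 2) * w) z)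
    -- (u, p) solves the 3D Navier–Stokes equations on (0,T)
    (hNS3 : ∀ t ∈ Ioo 0 T, ∀ x y z, ∀ i : Fin 3,
      deriv (fun τ => u τ x y z i) t
        - (∑ j : Fin 3, pd3 (fun a b d => pd3 (fun a' b' d' => u t a' b' d' i) j a b d) j x y z)
        + (∑ j : Fin 3, u t x y z j * pd3 (fun a b d => u t a b d i) j x y z)
      = pd3 (fun a b d => p t a b d) i x y z)
    (hdiv3 : ∀ t ∈ Ioo 0 T, ∀ x y z,
      (∑ j : Fin 3, pd3 (fun a b d => u t a b d j) j x y z) = 0) :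
    -- then (h, ρ) solves the 2D Navier–Stokes equations on (0,T)
    (∀ t ∈ Ioo 0 T, ∀ w z, ∀ i : Fin 2,
      deriv (fun τ => h τ w z i) t
        - (∑ j : Fin 2, pd2 (fun a d => pd2 (fun a' d' => h t a' d' i) j a d) j w z)
        + (∑ j : Fin 2, h t w z j * pd2 (fun a d => h t a d i) j w z)
      = pd2 (fun a d => ρ t a d) i w z) ∧
    (∀ t ∈ Ioo 0 T, ∀ w z,
      (∑ j : Fin 2, pd2 (fun a d => h t a d j) j w z) = 0) := by
  have hc : (0:ℝ) < 1 + c ^ 2 := by positivity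
  set s := Real.sqrt (1 + c ^ 2) with hsdef
  have hs2 : s ^ 2 = 1 + c ^ 2 := Real.sq_sqrt hc.le
  have hs0 : s ≠ 0 := by
    have : 0 < s := Real.sqrt_pos.mpr hc
    exact this.ne'
  constructor
  · -- momentum
    intro t ht w z i
    have hgt : ∀ i : Fin 3, ContDiff ℝ (⊤ : ℕ∞) (fun P : ℝ × ℝ => g t P.1 P.2 i) :=
      fun i => sliceCD (F := fun a b d => g a b d i) (contDiffOn_pi.mp hg i) ht
    have hqt : ContDiff ℝ (⊤ : ℕ∞) (fun P : ℝ × ℝ => q t P.1 P.2) := sliceCD hq ht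
    have hφ : ∀ i : Fin 3, ContDiff ℝ (⊤ : ℕ∞) (fun x => g t x z i) :=
      fun i => (hgt i).comp (contDiff_id.prodMk contDiff_const)
    have hφd : ∀ i : Fin 3, Differentiable ℝ (fun x => g t x z i) :=
      fun i => (hφ i).differentiable (by simp)
    have hφ'd : ∀ i : Fin 3, Differentiable ℝ (deriv (fun x => g t x z i)) :=
      fun i => derivDiff (hφ i)
    have hη : ∀ i : Fin 3, ContDiff ℝ (⊤ : ℕ∞) (fun y => g t (s * w) y i) :=
      fun i => (hgt i).comp (contDiff_const.prodMk contDiff_id)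
    have hηd : ∀ i : Fin 3, Differentiable ℝ (fun y => g t (s * w) y i) :=
      fun i => (hη i).differentiable (by simp)
    have hη'd : ∀ i : Fin 3, Differentiable ℝ (deriv (fun y => g t (s * w) y i)) :=
      fun i => derivDiff (hη i)
    have hκd : Differentiable ℝ (fun x => q t x z) :=
      (hqt.comp (contDiff_id.prodMk contDiff_const)).differentiable (by simp)
    have hθ : ∀ i : Fin 3, DifferentiableAt ℝ (fun τ => g τ (s * w) z i) t :=
      fun i => timeDiff (F := fun a b d => g a b d i) (contDiffOn_pi.mp hg i) ht _ _
    -- first-order shift derivative (nonlinear dir-1 term)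
    have p1g : ∀ i : Fin 3, deriv (fun b => g t (s * w - c * b) z i) 0
        = -c * deriv (fun x => g t x z i) (s * w) := by
      intro i; rw [dshift _ (hφd i)]; norm_num
    -- second-order shift derivative (Laplacian dir-1 term)
    have lap1 : ∀ i : Fin 3, deriv (deriv (fun b => g t (s * w - c * b) z i)) 0
        = c ^ 2 * deriv (deriv (fun x => g t x z i)) (s * w) := by
      intro i
      have e : deriv (fun b => g t (s * w - c * b) z i)
          = fun b => -c * deriv (fun x => g t x z i) (s * w - c * b) :=
        funext fun b => dshift _ (hφd i) _ _ _
      rw [e]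
      have Hi : HasDerivAt (fun b : ℝ => s * w - c * b) (-(c * 1)) 0 :=
        ((hasDerivAt_id 0).const_mul c).const_sub _
      have H : HasDerivAt (fun b => deriv (fun x => g t x z i) (s * w - c * b))
          (deriv (deriv (fun x => g t x z i)) (s * w - c * 0) * (-(c * 1))) 0 :=
        HasDerivAt.comp 0 (hφ'd i _).hasDerivAt Hi
      rw [(H.const_mul (-c)).deriv]
      simp only [mul_zero, sub_zero]; ring
    -- extract clean 3D NS equations
    have NS : ∀ i : Fin 3, deriv (fun τ => g τ (s * w) z i) t
        - (deriv (deriv (fun x => g t x z i)) (s * w)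
          + c ^ 2 * deriv (deriv (fun x => g t x z i)) (s * w)
          + deriv (deriv (fun y => g t (s * w) y i)) z)
        + (g t (s * w) z 0 * deriv (fun x => g t x z i) (s * w)
          + g t (s * w) z 1 * (-c * deriv (fun x => g t x z i) (s * w))
          + g t (s * w) z 2 * deriv (fun y => g t (s * w) y i) z)
        = pd3 (fun a b d => p t a b d) i (s * w) 0 z := by
      intro i
      have H := hNS3 t ht (s * w) 0 z i
      simp only [Fin.sum_univ_three, pd3_zero, pd3_one, pd3_two, hu, mul_zero, sub_zero] at H
      rw [lap1 i, p1g i] at H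
      exact H
    -- pressure values
    have PR0 : pd3 (fun a b d => p t a b d) 0 (s * w) 0 z
        = deriv (fun x => q t x z) (s * w) := by
      simp only [pd3_zero, hp, mul_zero, sub_zero]
    have PR1 : pd3 (fun a b d => p t a b d) 1 (s * w) 0 z
        = -c * deriv (fun x => q t x z) (s * w) := by
      simp only [pd3_one, hp]
      rw [dshift _ hκd]; norm_num
    have PR2 : pd3 (fun a b d => p t a b d) 2 (s * w) 0 z
        = deriv (fun y => q t (s * w) y) z := by
      simp only [pd3_two, hp, mul_zero, sub_zero]
    -- 2D first derivatives, w direction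
    have h0w : ∀ a, deriv (fun a' => h t a' z 0) a
        = deriv (fun x => g t x z 0) (s * a) - c * deriv (fun x => g t x z 1) (s * a) := by
      intro a
      simp only [hh1]
      have H0 : HasDerivAt (fun a' => g t (s * a') z 0)
          (deriv (fun x => g t x z 0) (s * a) * (s * 1)) a :=
        HasDerivAt.comp a (hφd 0 (s * a)).hasDerivAt ((hasDerivAt_id a).const_mul s)
      have H1 : HasDerivAt (fun a' => g t (s * a') z 1)
          (deriv (fun x => g t x z 1) (s * a) * (s * 1)) a :=
        HasDerivAt.comp a (hφd 1 (s * a)).hasDerivAt ((hasDerivAt_id a).const_mul s)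
      rw [((H0.fun_sub (H1.const_mul c)).const_mul (1 / s)).deriv]
      field_simp
    have h1w : ∀ a, deriv (fun a' => h t a' z 1) a
        = s * deriv (fun x => g t x z 2) (s * a) := by
      intro a; simp only [hh2]; exact dscale _ (hφd 2) s a
    -- 2D first derivatives, z direction
    have h0z : ∀ d, deriv (fun d' => h t w d' 0) d
        = 1 / s * (deriv (fun y => g t (s * w) y 0) d - c * deriv (fun y => g t (s * w) y 1) d) := by
      intro d
      simp only [hh1]
      exact (((hηd 0 d).hasDerivAt.sub ((hηd 1 d).hasDerivAt.const_mul c)).const_mul (1 / s)).deriv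
    have h1z : ∀ d, deriv (fun d' => h t w d' 1) d
        = deriv (fun y => g t (s * w) y 2) d := by
      intro d; simp only [hh2]
    -- 2D second derivatives, w direction
    have W20 : deriv (deriv (fun a' => h t a' z 0)) w
        = s * deriv (deriv (fun x => g t x z 0)) (s * w)
          - c * (s * deriv (deriv (fun x => g t x z 1)) (s * w)) := by
      have e : deriv (fun a' => h t a' z 0)
          = fun a => deriv (fun x => g t x z 0) (s * a) - c * deriv (fun x => g t x z 1) (s * a) :=
        funext h0w
      rw [e]
      have H0 : HasDerivAt (fun a => deriv (fun x => g t x z 0) (s * a))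
          (deriv (deriv (fun x => g t x z 0)) (s * w) * (s * 1)) w :=
        HasDerivAt.comp w (hφ'd 0 (s * w)).hasDerivAt ((hasDerivAt_id w).const_mul s)
      have H1 : HasDerivAt (fun a => deriv (fun x => g t x z 1) (s * a))
          (deriv (deriv (fun x => g t x z 1)) (s * w) * (s * 1)) w :=
        HasDerivAt.comp w (hφ'd 1 (s * w)).hasDerivAt ((hasDerivAt_id w).const_mul s)
      rw [(H0.fun_sub (H1.const_mul c)).deriv]; ring
    have W21 : deriv (deriv (fun a' => h t a' z 1)) w
        = s * (s * deriv (deriv (fun x => g t x z 2)) (s * w)) := by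
      have e : deriv (fun a' => h t a' z 1)
          = fun a => s * deriv (fun x => g t x z 2) (s * a) := funext h1w
      rw [e]
      have H2 : HasDerivAt (fun a => deriv (fun x => g t x z 2) (s * a))
          (deriv (deriv (fun x => g t x z 2)) (s * w) * (s * 1)) w :=
        HasDerivAt.comp w (hφ'd 2 (s * w)).hasDerivAt ((hasDerivAt_id w).const_mul s)
      rw [(H2.const_mul s).deriv]; ring
    -- 2D second derivatives, z direction
    have Z20 : deriv (deriv (fun d' => h t w d' 0)) z
        = 1 / s * (deriv (deriv (fun y => g t (s * w) y 0)) z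
            - c * deriv (deriv (fun y => g t (s * w) y 1)) z) := by
      have e : deriv (fun d' => h t w d' 0)
          = fun d => 1 / s * (deriv (fun y => g t (s * w) y 0) d
              - c * deriv (fun y => g t (s * w) y 1) d) := funext h0z
      rw [e]
      exact (((hη'd 0 z).hasDerivAt.sub ((hη'd 1 z).hasDerivAt.const_mul c)).const_mul (1 / s)).deriv
    have Z21 : deriv (deriv (fun d' => h t w d' 1)) z
        = deriv (deriv (fun y => g t (s * w) y 2)) z := by
      have e : deriv (fun d' => h t w d' 1) = deriv (fun y => g t (s * w) y 2) := funext h1z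
      rw [e]
    -- time derivatives
    have T0 : deriv (fun τ => h τ w z 0) t
        = 1 / s * (deriv (fun τ => g τ (s * w) z 0) t - c * deriv (fun τ => g τ (s * w) z 1) t) := by
      simp only [hh1]
      exact (((hθ 0).hasDerivAt.sub ((hθ 1).hasDerivAt.const_mul c)).const_mul (1 / s)).deriv
    have T1 : deriv (fun τ => h τ w z 1) t = deriv (fun τ => g τ (s * w) z 2) t := by
      simp only [hh2]
    -- pressure 2D
    have PW : deriv (fun a => ρ t a z) w = s * deriv (fun x => q t x z) (s * w) := by
      simp only [hρ]; exact dscale _ hκd s w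
    have PZ : deriv (fun d => ρ t w d) z = deriv (fun y => q t (s * w) y) z := by
      simp only [hρ]
    have NS0 := NS 0; rw [PR0] at NS0
    have NS1 := NS 1; rw [PR1] at NS1
    have NS2 := NS 2; rw [PR2] at NS2
    fin_cases i
    · simp only [Fin.mk_zero, Fin.mk_one, Fin.isValue, Fin.sum_univ_two, pd2_zero, pd2_one]
      rw [T0, W20, Z20, h0w w, h0z z, PW, hh1, hh2]
      field_simp
      linear_combination NS0 - c * NS1 +
        (-deriv (fun x => q t x z) (s * w) - deriv (deriv fun x => g t x z 0) (s * w) +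
          c * deriv (deriv fun x => g t x z 1) (s * w)) * hs2
    · simp only [Fin.mk_zero, Fin.mk_one, Fin.isValue, Fin.sum_univ_two, pd2_zero, pd2_one]
      rw [T1, W21, Z21, h1w w, h1z z, PZ, hh1, hh2]
      field_simp
      linear_combination NS2 - deriv (deriv fun x => g t x z 2) (s * w) * hs2
  · -- divergence
    intro t ht w z
    have hgt : ∀ i : Fin 3, ContDiff ℝ (⊤ : ℕ∞) (fun P : ℝ × ℝ => g t P.1 P.2 i) :=
      fun i => sliceCD (F := fun a b d => g a b d i) (contDiffOn_pi.mp hg i) ht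
    have hφ : ∀ i : Fin 3, ContDiff ℝ (⊤ : ℕ∞) (fun x => g t x z i) :=
      fun i => (hgt i).comp (contDiff_id.prodMk contDiff_const)
    have hφd : ∀ i : Fin 3, Differentiable ℝ (fun x => g t x z i) :=
      fun i => (hφ i).differentiable (by simp)
    have hηd : ∀ i : Fin 3, Differentiable ℝ (fun d => g t (s * w) d i) :=
      fun i => ((hgt i).comp (contDiff_const.prodMk contDiff_id)).differentiable (by simp)
    have Dv := hdiv3 t ht (s * w) 0 z
    simp only [Fin.sum_univ_three, pd3_zero, pd3_one, pd3_two, hu, mul_zero, sub_zero] at Dv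
    -- Dv : deriv (fun a => g t a z 0) (s*w) + deriv (fun b => g t (s*w - c*b) z 1) 0
    --      + deriv (fun d => g t (s*w) d 2) z = 0
    have p1 : deriv (fun b => g t (s * w - c * b) z 1) 0
        = -c * deriv (fun x => g t x z 1) (s * w) := by
      rw [dshift _ (hφd 1)]; norm_num
    rw [p1] at Dv
    -- goal
    simp only [Fin.sum_univ_two, pd2_zero, pd2_one, hh1, hh2]
    have H0 : HasDerivAt (fun a' => g t (s * a') z 0)
        (deriv (fun x => g t x z 0) (s * w) * (s * 1)) w :=
      HasDerivAt.comp w (hφd 0 (s * w)).hasDerivAt ((hasDerivAt_id w).const_mul s)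
    have H1 : HasDerivAt (fun a' => g t (s * a') z 1)
        (deriv (fun x => g t x z 1) (s * w) * (s * 1)) w :=
      HasDerivAt.comp w (hφd 1 (s * w)).hasDerivAt ((hasDerivAt_id w).const_mul s)
    have e1 : deriv (fun a => 1 / s * (g t (s * a) z 0 - c * g t (s * a) z 1)) w
        = 1 / s * (deriv (fun x => g t x z 0) (s * w) * (s * 1)
            - c * (deriv (fun x => g t x z 1) (s * w) * (s * 1))) :=
      ((H0.sub (H1.const_mul c)).const_mul (1 / s)).deriv
    rw [e1]
    field_simp
    linear_combination Dv
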